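/- Let (X,w) be a weighted 2-dimensional simplicial complex with balanced weights, A the weighted averaging operator on vertices, and for each vertex v let g_v denote the restriction of g: X(0) → ℝ to the link X_v. Then ⟨Ag, g⟩_X = E_{v ~ w|X(0)}[⟨A_v g_v, g_v⟩_{X_v}], where the expectations and inner products use the balanced weight distributions. -/

import Mathlib

open Finset

/-- The weight of the (ordered) edge `(v,u)` in a weighted 2-dimensional simplicial complex
whose balanced weights are given by a probability distribution `m` on ordered triangles. -/
noncomputable def edgeWt {V : Type*} [Fintype V] (m : V → V → V → ℝ) (v u : V) : ℝ :=
  ∑ w, m v u w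

/-- The weight of the vertex `v`. -/
noncomputable def vertWt {V : Type*} [Fintype V] (m : V → V → V → ℝ) (v : V) : ℝ :=
  ∑ u, edgeWt m v u

/-! Both quadratic forms expand to triple sums over ordered triangles: the global one to
`∑ m v u w · g u · g v` and the local one to `∑ m v u w · g w · g u`. They agree because the
symmetry of `m` makes its edge marginal independent of which coordinate is summed out. The
divisions cancel even where a weight vanishes, since nonnegative weights vanish along with
their total. -/

section TriangleWeights

variable {V : Type*} [Fintype V] (m : V → V → V → ℝ)

lemma eq_zero_of_edgeWt_eq_zero (hnn : ∀ u v w, 0 ≤ m u v w) {v u : V}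
    (h : edgeWt m v u = 0) (w : V) : m v u w = 0 :=
  (sum_eq_zero_iff_of_nonneg fun w _ => hnn v u w).1 h w (mem_univ w)

lemma edgeWt_nonneg (hnn : ∀ u v w, 0 ≤ m u v w) (v u : V) : 0 ≤ edgeWt m v u :=
  sum_nonneg fun w _ => hnn v u w

lemma edgeWt_eq_zero_of_vertWt_eq_zero (hnn : ∀ u v w, 0 ≤ m u v w) {v : V}
    (h : vertWt m v = 0) (u : V) : edgeWt m v u = 0 :=
  (sum_eq_zero_iff_of_nonneg fun u _ => edgeWt_nonneg m hnn v u).1 h u (mem_univ u)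

lemma sum_fst_eq_edgeWt (hsymm1 : ∀ u v w, m u v w = m v u w)
    (hsymm2 : ∀ u v w, m u v w = m u w v) (u w : V) :
    ∑ v, m v u w = edgeWt m u w :=
  sum_congr rfl fun v _ => by rw [hsymm1, hsymm2]

lemma vertWt_mul_avg_mul_eq_sum (hnn : ∀ u v w, 0 ≤ m u v w) (g : V → ℝ) (v : V) :
    vertWt m v * ((∑ u, edgeWt m v u * g u) / vertWt m v) * g v =
      ∑ u, edgeWt m v u * g u * g v := by
  rw [mul_div_cancel_of_imp', sum_mul]
  intro h
  simp [edgeWt_eq_zero_of_vertWt_eq_zero m hnn h]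

lemma vertWt_mul_linkForm_eq_sum (hnn : ∀ u v w, 0 ≤ m u v w) (g : V → ℝ) (v : V) :
    vertWt m v * ∑ u, (edgeWt m v u / vertWt m v) *
        ((∑ w, m v u w * g w) / edgeWt m v u) * g u =
      ∑ u, (∑ w, m v u w * g w) * g u := by
  rw [mul_sum]
  refine sum_congr rfl fun u _ => ?_
  have hvert : vertWt m v * (edgeWt m v u / vertWt m v) = edgeWt m v u :=
    mul_div_cancel_of_imp' fun h => edgeWt_eq_zero_of_vertWt_eq_zero m hnn h u
  have hedge : edgeWt m v u * ((∑ w, m v u w * g w) / edgeWt m v u) = ∑ w, m v u w * g w :=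
    mul_div_cancel_of_imp' fun h => by simp [eq_zero_of_edgeWt_eq_zero m hnn h]
  rw [← mul_assoc, ← mul_assoc, hvert, hedge]

end TriangleWeights

theorem quadratic_form_local_decomposition_general {V : Type*} [Fintype V]
    (m : V → V → V → ℝ)
    (hnn : ∀ u v w, 0 ≤ m u v w)
    (hsymm1 : ∀ u v w, m u v w = m v u w)
    (hsymm2 : ∀ u v w, m u v w = m u w v)
    (g : V → ℝ) :
    ∑ v, vertWt m v * ((∑ u, edgeWt m v u * g u) / vertWt m v) * g v =
      ∑ v, vertWt m v * ∑ u, (edgeWt m v u / vertWt m v) *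
        ((∑ w, m v u w * g w) / edgeWt m v u) * g u := by
  simp only [vertWt_mul_avg_mul_eq_sum m hnn, vertWt_mul_linkForm_eq_sum m hnn]
  calc ∑ v, ∑ u, edgeWt m v u * g u * g v
      = ∑ u, ∑ w, (∑ v, m v u w) * g w * g u := by
        simp only [sum_fst_eq_edgeWt m hsymm1 hsymm2]
    _ = ∑ v, ∑ u, (∑ w, m v u w * g w) * g u := by
        simp only [sum_mul]
        exact (sum_congr rfl fun u _ => sum_comm).trans sum_comm

/-- Local-to-global decomposition of the quadratic form: for a weighted 2-dimensional
simplicial complex with balanced weights (encoded by the symmetric probability distribution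
`m` on ordered triangles), the averaging operator `A` on vertices and the link averaging
operators `A_v` satisfy `⟨Ag, g⟩_X = E_{v ~ w|X(0)} [⟨A_v g_v, g_v⟩_{X_v}]`. -/
theorem quadratic_form_local_decomposition {V : Type*} [Fintype V] [DecidableEq V]
    (m : V → V → V → ℝ)
    (hnn : ∀ u v w, 0 ≤ m u v w)
    (hsymm1 : ∀ u v w, m u v w = m v u w)
    (hsymm2 : ∀ u v w, m u v w = m u w v)
    (hdist : ∀ u v w, (u = v ∨ v = w ∨ u = w) → m u v w = 0)
    (hsum : ∑ u, ∑ v, ∑ w, m u v w = 1)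
    (hpos : ∀ v, 0 < vertWt m v)
    (g : V → ℝ) :
    ∑ v, vertWt m v * ((∑ u, edgeWt m v u * g u) / vertWt m v) * g v =
      ∑ v, vertWt m v * ∑ u, (edgeWt m v u / vertWt m v) *
        ((∑ w, m v u w * g w) / edgeWt m v u) * g u :=
  quadratic_form_local_decomposition_general m hnn hsymm1 hsymm2 g
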